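/- For λ > 0 and r > 0, ∫_r^∞ ∫_r^{r₂} (2r/(r₁+r₂))·8λ²·exp(-2λ(r₁+r₂)) dr₁ dr₂ = 4λr·exp(-4λr) - 16λ²r²·E₁(4λr), where E₁ is the exponential integral. -/

import Mathlib

/-!
Substituting `t = 2λ(r₁ + r₂)` turns the inner integral into
`16λ²r (E₁(2λ(r + r₂)) - E₁(4λr₂))`. Since `E₁'(z) = -e^{-z}/z`, the function
`y E₁(c y) - e^{-c y}/c` is an antiderivative of the nonnegative function `y ↦ E₁(c y)` and tends
to `0` at infinity, which evaluates the outer integral.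
-/

open Real MeasureTheory

noncomputable def E1 (z : ℝ) : ℝ := ∫ t in Set.Ioi z, Real.exp (-t) / t

open Set Filter Topology

lemma continuousOn_exp_neg_div_self : ContinuousOn (fun t => exp (-t) / t) (Ioi 0) :=
  (continuous_exp.comp continuous_neg).continuousOn.div continuousOn_id fun _ ht => ht.ne'

lemma integrableOn_exp_neg_div_self {a : ℝ} (ha : 0 < a) :
    IntegrableOn (fun t => exp (-t) / t) (Ioi a) := by
  refine ((integrableOn_exp_neg_Ioi a).mul_const a⁻¹).mono' ?_ ?_
  · exact (continuousOn_exp_neg_div_self.mono fun t ht => ha.trans ht).aestronglyMeasurable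
      measurableSet_Ioi
  · filter_upwards [ae_restrict_mem measurableSet_Ioi] with t ht
    rw [norm_of_nonneg (div_nonneg (exp_pos _).le (ha.trans ht).le), div_eq_mul_inv]
    gcongr
    exact ht.le

lemma E1_nonneg {z : ℝ} (hz : 0 < z) : 0 ≤ E1 z :=
  setIntegral_nonneg measurableSet_Ioi fun _ ht => div_nonneg (exp_pos _).le (hz.trans ht).le

lemma E1_le {z : ℝ} (hz : 0 < z) : E1 z ≤ exp (-z) / z :=
  calc E1 z ≤ ∫ t in Ioi z, exp (-t) / z := by
        refine setIntegral_mono_on (integrableOn_exp_neg_div_self hz)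
          ((integrableOn_exp_neg_Ioi z).div_const z) measurableSet_Ioi fun t ht => ?_
        exact div_le_div_of_nonneg_left (exp_pos _).le hz ht.le
    _ = exp (-z) / z := by rw [integral_div, integral_exp_neg_Ioi]

lemma E1_sub_E1 {a b : ℝ} (ha : 0 < a) (hb : 0 < b) :
    E1 a - E1 b = ∫ t in a..b, exp (-t) / t :=
  intervalIntegral.integral_Ioi_sub_Ioi' (integrableOn_exp_neg_div_self ha)
    (integrableOn_exp_neg_div_self hb)

lemma hasDerivAt_E1 {z : ℝ} (hz : 0 < z) : HasDerivAt E1 (-(exp (-z) / z)) z := by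
  have hFTC : HasDerivAt (fun x => ∫ t in z..x, exp (-t) / t) (exp (-z) / z) z :=
    intervalIntegral.integral_hasDerivAt_right IntervalIntegrable.refl
      (continuousOn_exp_neg_div_self.stronglyMeasurableAtFilter isOpen_Ioi z hz)
      (continuousOn_exp_neg_div_self.continuousAt (Ioi_mem_nhds hz))
  refine (hFTC.const_sub (E1 z)).congr_of_eventuallyEq ?_
  filter_upwards [Ioi_mem_nhds hz] with x hx
  rw [← E1_sub_E1 hz hx, sub_sub_cancel]

lemma integral_exp_neg_mul_add_div_add {c s a b : ℝ} (hc : 0 < c) (ha : 0 < a + s)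
    (hb : 0 < b + s) :
    ∫ x in a..b, exp (-(c * (x + s))) / (x + s) = E1 (c * (a + s)) - E1 (c * (b + s)) := by
  have hpoint : ∀ x, exp (-(c * (x + s))) / (x + s)
      = c * (exp (-(c * x + c * s)) / (c * x + c * s)) := fun x => by
    rw [← mul_add]
    field_simp
  simp_rw [hpoint, intervalIntegral.integral_const_mul,
    intervalIntegral.integral_comp_mul_add (fun x => exp (-x) / x) hc.ne', smul_eq_mul,
    mul_inv_cancel_left₀ hc.ne', ← mul_add]
  exact (E1_sub_E1 (by positivity) (by positivity)).symm

lemma hasDerivAt_mul_E1_sub_exp {c y : ℝ} (hc : 0 < c) (hy : 0 < y) :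
    HasDerivAt (fun x => x * E1 (c * x) - exp (-(c * x)) / c) (E1 (c * y)) y := by
  have hcy : HasDerivAt (fun x => c * x) c y := by simpa using (hasDerivAt_id y).const_mul c
  have hE := (hasDerivAt_E1 (mul_pos hc hy)).comp y hcy
  refine (((hasDerivAt_id y).mul hE).sub (hcy.neg.exp.div_const c)).congr_deriv ?_
  simp only [id, Function.comp_def, Pi.neg_apply]
  field_simp
  ring

lemma tendsto_exp_neg_mul_div_atTop {c : ℝ} (hc : 0 < c) :
    Tendsto (fun y => exp (-(c * y)) / c) atTop (𝓝 0) := by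
  simpa using (tendsto_exp_neg_atTop_nhds_zero.comp (tendsto_id.const_mul_atTop hc)).div_const c

lemma tendsto_mul_E1_mul_atTop {c : ℝ} (hc : 0 < c) :
    Tendsto (fun y => y * E1 (c * y)) atTop (𝓝 0) := by
  refine squeeze_zero' ?_ ?_ (tendsto_exp_neg_mul_div_atTop hc)
  · filter_upwards [eventually_gt_atTop 0] with y hy
    exact mul_nonneg hy.le (E1_nonneg (by positivity))
  · filter_upwards [eventually_gt_atTop 0] with y hy
    calc y * E1 (c * y) ≤ y * (exp (-(c * y)) / (c * y)) := by
          gcongr; exact E1_le (by positivity)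
      _ = exp (-(c * y)) / c := by field_simp

section IntegralE1

variable {c s a : ℝ}

lemma hasDerivAt_antideriv_E1_mul_add (hc : 0 < c) {x : ℝ} (hx : 0 < x + s) :
    HasDerivAt (fun x => (x + s) * E1 (c * (x + s)) - exp (-(c * (x + s))) / c)
      (E1 (c * (x + s))) x :=
  (hasDerivAt_mul_E1_sub_exp hc hx).comp_add_const x s

lemma tendsto_antideriv_E1_mul_add (hc : 0 < c) :
    Tendsto (fun x => (x + s) * E1 (c * (x + s)) - exp (-(c * (x + s))) / c) atTop (𝓝 0) := by
  simpa only [sub_zero, Function.comp_def, id] using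
    ((tendsto_mul_E1_mul_atTop hc).sub (tendsto_exp_neg_mul_div_atTop hc)).comp
      (tendsto_atTop_add_const_right _ s tendsto_id)

lemma integrableOn_E1_mul_add (hc : 0 < c) (ha : 0 < a + s) :
    IntegrableOn (fun x => E1 (c * (x + s))) (Ioi a) :=
  integrableOn_Ioi_deriv_of_nonneg'
    (fun x hx => hasDerivAt_antideriv_E1_mul_add hc (by linarith [hx.out]))
    (fun x hx => E1_nonneg (mul_pos hc (by linarith [hx.out])))
    (tendsto_antideriv_E1_mul_add hc)

lemma integral_E1_mul_add (hc : 0 < c) (ha : 0 < a + s) :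
    ∫ x in Ioi a, E1 (c * (x + s)) = exp (-(c * (a + s))) / c - (a + s) * E1 (c * (a + s)) := by
  rw [integral_Ioi_of_hasDerivAt_of_nonneg'
    (fun x hx => hasDerivAt_antideriv_E1_mul_add hc (by linarith [hx.out]))
    (fun x hx => E1_nonneg (mul_pos hc (by linarith [hx.out])))
    (tendsto_antideriv_E1_mul_add hc)]
  ring

end IntegralE1

theorem stmt7 (lam r : ℝ) (hlam : 0 < lam) (hr : 0 < r) :
    (∫ r2 in Set.Ioi r, ∫ r1 in r..r2,
        (2 * r / (r1 + r2)) * (8 * lam ^ 2 * Real.exp (-2 * lam * (r1 + r2))))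
      = 4 * lam * r * Real.exp (-4 * lam * r)
        - 16 * lam ^ 2 * r ^ 2 * E1 (4 * lam * r) := by
  have hinner : ∀ r2 ∈ Ioi r, ∫ r1 in r..r2,
      (2 * r / (r1 + r2)) * (8 * lam ^ 2 * exp (-2 * lam * (r1 + r2)))
        = 16 * lam ^ 2 * r * (E1 (2 * lam * (r2 + r)) - E1 (4 * lam * (r2 + 0))) := by
    intro r2 hr2
    have hr2 : r < r2 := hr2
    have hpoint : ∀ r1, (2 * r / (r1 + r2)) * (8 * lam ^ 2 * exp (-2 * lam * (r1 + r2)))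
        = 16 * lam ^ 2 * r * (exp (-(2 * lam * (r1 + r2))) / (r1 + r2)) := fun r1 => by
      rw [neg_mul, neg_mul]
      ring
    simp_rw [hpoint, intervalIntegral.integral_const_mul,
      integral_exp_neg_mul_add_div_add (a := r) (b := r2) (by positivity : 0 < 2 * lam)
        (by linarith) (by linarith)]
    ring_nf
  rw [setIntegral_congr_fun measurableSet_Ioi hinner, integral_const_mul,
    integral_sub (integrableOn_E1_mul_add (by positivity) (by linarith))
      (integrableOn_E1_mul_add (by positivity) (by linarith)),
    integral_E1_mul_add (by positivity) (by linarith),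
    integral_E1_mul_add (by positivity) (by linarith)]
  field_simp
  ring_nf
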